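/- Suppose P is a polynomial in A, B, B₂, B₃, X of weighted degree at most n (with weights deg A = deg B = deg X = 1, deg B₂ = 2, deg B₃ = 3), and suppose the derivation D defined by D(A) = A₂ − A², D(B) = B₂ − B², D(B₂) = B₃ − B B₂, D(B₃) = B₄ − B B₃, D(X) = 5X(X−1), with A₂ and B₄ replaced via the relations A₂ = −4B₂ − 2AB − 2B + 2B² − 2A + 10XB + 5XA − 5X − 1 and B₄ = 10X B₃ − 35X B₂ + 50X B − 24X. Then D(P) is a polynomial in A, B, B₂, B₃, X of weighted degree at most n + 1. -/

import Mathlib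

/-!
The polynomials of weighted degree at most `m` form a filtration `F m` of `ℚ[A, B, B₂, B₃, X]`
with `F m * F n ⊆ F (m + n)`. By the Leibniz rule a derivation sends the monomial `x ^ s` to
`∑ i, s i • x ^ (s - eᵢ) * D xᵢ`, so it raises the filtration degree by at most one as soon as
each `D xᵢ` lies in `F (w i + 1)`. For `D = ψ∂_ψ` this is a direct check on the five images
`D A, D B, D B₂, D B₃, D X`.
-/

open MvPolynomial

/-- The derivation `D` modeling `ψ∂_ψ` on `ℚ[A, B, B₂, B₃, X]` (variables indexed
`0 = A, 1 = B, 2 = B₂, 3 = B₃, 4 = X`), with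
`D(A) = A₂ − A²`, `D(B) = B₂ − B²`, `D(B₂) = B₃ − B·B₂`, `D(B₃) = B₄ − B·B₃`,
`D(X) = 5X(X−1)`, where `A₂` and `B₄` are replaced via the relations
`A₂ = −4B₂ − 2AB − 2B + 2B² − 2A + 10XB + 5XA − 5X − 1` and
`B₄ = 10X B₃ − 35X B₂ + 50X B − 24X`. -/
noncomputable def quinticDerivation :
    Derivation ℚ (MvPolynomial (Fin 5) ℚ) (MvPolynomial (Fin 5) ℚ) :=
  MvPolynomial.mkDerivation ℚ
    ![(-4 * X 2 - 2 * X 0 * X 1 - 2 * X 1 + 2 * X 1 ^ 2 - 2 * X 0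
        + 10 * X 4 * X 1 + 5 * X 4 * X 0 - 5 * X 4 - 1) - X 0 ^ 2,
      X 2 - X 1 ^ 2,
      X 3 - X 1 * X 2,
      (10 * X 4 * X 3 - 35 * X 4 * X 2 + 50 * X 4 * X 1 - 24 * X 4) - X 1 * X 3,
      5 * X 4 * (X 4 - 1)]

namespace MvPolynomial

open Finsupp
open scoped Pointwise

variable {σ R : Type*} [CommSemiring R] {w : σ → ℕ} {m n : ℕ} {p q : MvPolynomial σ R}

variable (R) in
noncomputable def restrictWeightedTotalDegree (w : σ → ℕ) (m : ℕ) :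
    Submodule R (MvPolynomial σ R) :=
  restrictSupport R {d | weight w d ≤ m}

theorem mem_restrictWeightedTotalDegree :
    p ∈ restrictWeightedTotalDegree R w m ↔ weightedTotalDegree w p ≤ m := by
  simp [mem_restrictSupport_iff, restrictWeightedTotalDegree, weightedTotalDegree,
    Set.subset_def]

theorem restrictWeightedTotalDegree_mono (h : m ≤ n) :
    restrictWeightedTotalDegree R w m ≤ restrictWeightedTotalDegree R w n :=
  restrictSupport_mono R fun _ hd ↦ le_trans hd h

theorem monomial_mem_restrictWeightedTotalDegree (s : σ →₀ ℕ) (r : R) :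
    monomial s r ∈ restrictWeightedTotalDegree R w (weight w s) := by
  simp [restrictWeightedTotalDegree]

theorem C_mem_restrictWeightedTotalDegree (r : R) :
    C r ∈ restrictWeightedTotalDegree R w m :=
  restrictWeightedTotalDegree_mono (Nat.zero_le m) <| by
    simpa using monomial_mem_restrictWeightedTotalDegree (w := w) 0 r

theorem one_mem_restrictWeightedTotalDegree :
    (1 : MvPolynomial σ R) ∈ restrictWeightedTotalDegree R w m :=
  C_mem_restrictWeightedTotalDegree 1

theorem ofNat_mem_restrictWeightedTotalDegree (k : ℕ) [k.AtLeastTwo] :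
    (OfNat.ofNat k : MvPolynomial σ R) ∈ restrictWeightedTotalDegree R w m := by
  simpa only [map_ofNat] using
    C_mem_restrictWeightedTotalDegree (w := w) (m := m) (OfNat.ofNat k : R)

theorem X_mem_restrictWeightedTotalDegree_of_le {i : σ} (h : w i ≤ m) :
    X i ∈ restrictWeightedTotalDegree R w m := by
  have hX := monomial_mem_restrictWeightedTotalDegree (R := R) (w := w) (single i 1) 1
  rw [weight_single, one_smul] at hX
  exact restrictWeightedTotalDegree_mono h hX

theorem mul_mem_restrictWeightedTotalDegree (hp : p ∈ restrictWeightedTotalDegree R w m)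
    (hq : q ∈ restrictWeightedTotalDegree R w n) :
    p * q ∈ restrictWeightedTotalDegree R w (m + n) := by
  have hsupp : {d : σ →₀ ℕ | weight w d ≤ m} + {d | weight w d ≤ n} ⊆
      {d | weight w d ≤ m + n} := by
    rintro _ ⟨a, ha, b, hb, rfl⟩
    exact (map_add (weight w) a b).trans_le (add_le_add ha hb)
  exact restrictSupport_mono R hsupp <|
    (restrictSupport_add R _ _).ge (Submodule.mul_mem_mul hp hq)

/- The degree of `p` is prescribed as `m - w i` (with `w i ≤ m` keeping the truncated
subtraction honest) so that `apply_rules` can use this lemma without guessing a degree split. -/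
theorem mul_X_mem_restrictWeightedTotalDegree {i : σ}
    (hp : p ∈ restrictWeightedTotalDegree R w (m - w i)) (h : w i ≤ m) :
    p * X i ∈ restrictWeightedTotalDegree R w m :=
  Nat.sub_add_cancel h ▸
    mul_mem_restrictWeightedTotalDegree hp (X_mem_restrictWeightedTotalDegree_of_le le_rfl)

theorem derivation_mem_restrictWeightedTotalDegree
    (D : Derivation R (MvPolynomial σ R) (MvPolynomial σ R))
    (hD : ∀ i, D (X i) ∈ restrictWeightedTotalDegree R w (w i + 1))
    (hp : p ∈ restrictWeightedTotalDegree R w n) :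
    D p ∈ restrictWeightedTotalDegree R w (n + 1) := by
  have hD_eq : D = mkDerivation R fun i ↦ D (X i) :=
    derivation_ext fun i ↦ by rw [mkDerivation_X]
  suffices h : restrictWeightedTotalDegree R w n ≤
      (restrictWeightedTotalDegree R w (n + 1)).comap D.toLinearMap from h hp
  rw [restrictWeightedTotalDegree, restrictSupport_eq_span, Submodule.span_le]
  rintro _ ⟨s, hs, rfl⟩
  change D (monomial s 1) ∈ restrictWeightedTotalDegree R w (n + 1)
  rw [hD_eq, mkDerivation_monomial, one_smul]
  refine Submodule.finsuppSum_mem _ _ _ _ fun i hi ↦ ?_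
  refine restrictWeightedTotalDegree_mono ?_ (mul_mem_restrictWeightedTotalDegree
    (monomial_mem_restrictWeightedTotalDegree _ _) (hD i))
  rw [← add_assoc, weight_sub_single_add hi]
  exact Nat.add_le_add_right hs 1

end MvPolynomial

theorem quinticDerivation_X_mem_restrictWeightedTotalDegree (i : Fin 5) :
    quinticDerivation (X i) ∈
      restrictWeightedTotalDegree ℚ ![1, 1, 2, 3, 1] (![1, 1, 2, 3, 1] i + 1) := by
  rw [quinticDerivation, mkDerivation_X]
  -- Reducible transparency keeps the failed unifications against large polynomials cheap.
  fin_cases i <;>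
    simp only [Fin.zero_eta, Fin.mk_one, Fin.reduceFinMk, Matrix.cons_val, Nat.reduceAdd, sq,
      mul_sub, neg_mul, mul_one, ← mul_assoc] <;>
    apply_rules (transparency := .reducible) only [Submodule.add_mem, Submodule.sub_mem,
      Submodule.neg_mem, mul_X_mem_restrictWeightedTotalDegree,
      X_mem_restrictWeightedTotalDegree_of_le, one_mem_restrictWeightedTotalDegree,
      ofNat_mem_restrictWeightedTotalDegree] <;>
    decide

theorem quinticDerivation_weighted_degree (n : ℕ) (P : MvPolynomial (Fin 5) ℚ)
    (hP : weightedTotalDegree (![1, 1, 2, 3, 1] : Fin 5 → ℕ) P ≤ n) :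
    weightedTotalDegree (![1, 1, 2, 3, 1] : Fin 5 → ℕ) (quinticDerivation P) ≤ n + 1 := by
  rw [← mem_restrictWeightedTotalDegree] at hP ⊢
  exact derivation_mem_restrictWeightedTotalDegree _
    quinticDerivation_X_mem_restrictWeightedTotalDegree hP
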